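/- Let n ≥ 2 and let ℓ : ℝ → [0,∞) be measurable such that F_ℓ is a set of finite perimeter and finite volume in ℝⁿ. Fix z̄ ∈ ℝ and w ∈ ℝ^{n-1} with |w| < r_ℓ^∧(z̄). Then (z̄,w) is a point of density 1 of F_ℓ, i.e. lim_{ρ→0⁺} ℋ^n(F_ℓ ∩ B_ρ((z̄,w)))/(ω_n ρⁿ) = 1. -/

import Mathlib

open MeasureTheory Metric Set Filter
open scoped ENNReal NNReal Topology RealInnerProductSpace symmDiff

noncomputable section

namespace Schwarz

/-- The point `(z, w) ∈ ℝ × ℝ^m ≅ ℝ^(m+1)`. -/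
def mk' {m : ℕ} (z : ℝ) (w : EuclideanSpace ℝ (Fin m)) : EuclideanSpace ℝ (Fin (m + 1)) :=
  (WithLp.equiv 2 (Fin (m + 1) → ℝ)).symm (Fin.cons z ((WithLp.equiv 2 (Fin m → ℝ)) w))

/-- The `w`-component of a point of `ℝ^(m+1) ≅ ℝ × ℝ^m`. -/
def tailv {m : ℕ} (x : EuclideanSpace ℝ (Fin (m + 1))) : EuclideanSpace ℝ (Fin m) :=
  (WithLp.equiv 2 (Fin m → ℝ)).symm (fun i => x i.succ)

/-- The slice of a subset of `ℝ^(m+1)` at height `z`. -/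
def slice {m : ℕ} (A : Set (EuclideanSpace ℝ (Fin (m + 1)))) (z : ℝ) :
    Set (EuclideanSpace ℝ (Fin m)) := {w | mk' z w ∈ A}

/-- `ω_d`, the Lebesgue measure of the unit ball of `ℝ^d`. -/
def ballVol (d : ℕ) : ℝ≥0∞ := volume (ball (0 : EuclideanSpace ℝ (Fin d)) 1)

/-- `A ⊆ ℝ^(m+1)` is `ℓ`-distributed: a.e. slice has measure `ℓ z`. -/
def IsDistributed (m : ℕ) (ℓ : ℝ → ℝ) (A : Set (EuclideanSpace ℝ (Fin (m + 1)))) : Prop :=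
  ∀ᵐ z ∂(volume : Measure ℝ), volume (slice A z) = ENNReal.ofReal (ℓ z)

/-- The radius `r_ℓ(z) = (ℓ z / ω_m)^(1/m)`. -/
def rad (m : ℕ) (ℓ : ℝ → ℝ) (z : ℝ) : ℝ := (ℓ z / (ballVol m).toReal) ^ ((1 : ℝ) / m)

/-- The Schwarz symmetric set `F_ℓ`. -/
def F (m : ℕ) (ℓ : ℝ → ℝ) : Set (EuclideanSpace ℝ (Fin (m + 1))) :=
  {x | ‖tailv x‖ < rad m ℓ (x 0)}

/-- The density of `A` at `x` equals `s` (balls of volume `ω_d ρ^d`). -/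
def DensAt {d : ℕ} (A : Set (EuclideanSpace ℝ (Fin d))) (x : EuclideanSpace ℝ (Fin d))
    (s : ℝ≥0∞) : Prop :=
  Tendsto (fun ρ : ℝ => volume (A ∩ ball x ρ) / (ballVol d * ENNReal.ofReal (ρ ^ d)))
    (𝓝[>] 0) (𝓝 s)

/-- The essential (measure-theoretic) boundary: where the density is neither 0 nor 1.
By Federer's theorem it agrees with the reduced boundary up to `ℋ^(d-1)`-null sets. -/
def essBoundary {d : ℕ} (A : Set (EuclideanSpace ℝ (Fin d))) :
    Set (EuclideanSpace ℝ (Fin d)) :=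
  {x | ¬ DensAt A x 0 ∧ ¬ DensAt A x 1}

/-- Relative perimeter `P(A; G) = ℋ^(d-1)(G ∩ ∂*A)`. -/
def perim {d : ℕ} (A G : Set (EuclideanSpace ℝ (Fin d))) : ℝ≥0∞ :=
  μH[(d : ℝ) - 1] (G ∩ essBoundary A)

/-- A set of finite perimeter (via Federer's criterion). -/
def HasFinPerim {d : ℕ} (A : Set (EuclideanSpace ℝ (Fin d))) : Prop :=
  MeasurableSet A ∧ perim A univ < ⊤

/-- Translation of a subset of `ℝ^(m+1)` by the horizontal vector `(0, τ)`. -/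
def vtrans {m : ℕ} (τ : EuclideanSpace ℝ (Fin m)) (A : Set (EuclideanSpace ℝ (Fin (m + 1)))) :
    Set (EuclideanSpace ℝ (Fin (m + 1))) := (fun x => x + mk' 0 τ) '' A

/-- One-dimensional density of `A ⊆ ℝ` at `x` equals `s`. -/
def DensAtR (A : Set ℝ) (x : ℝ) (s : ℝ≥0∞) : Prop :=
  Tendsto (fun ρ : ℝ => volume (A ∩ ball x ρ) / ENNReal.ofReal (2 * ρ)) (𝓝[>] 0) (𝓝 s)

/-- Approximate lower limit `g^∧(x)`. -/
def approxLower (g : ℝ → ℝ) (x : ℝ) : EReal :=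
  sSup ((fun s : ℝ => (s : EReal)) '' {s : ℝ | DensAtR {y | g y < s} x 0})

/-- Approximate upper limit `g^∨(x)`. -/
def approxUpper (g : ℝ → ℝ) (x : ℝ) : EReal :=
  sInf ((fun s : ℝ => (s : EReal)) '' {s : ℝ | DensAtR {y | s < g y} x 0})

/-- Divergence of a vector field on `ℝ^d`. -/
def divg {d : ℕ} (T : EuclideanSpace ℝ (Fin d) → EuclideanSpace ℝ (Fin d))
    (x : EuclideanSpace ℝ (Fin d)) : ℝ :=
  ∑ i, fderiv ℝ T x (EuclideanSpace.single i 1) i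

/-- `ν` is a measure-theoretic outer unit normal of `A`: the generalised Gauss–Green
formula holds on the (essential = reduced, up to `ℋ^(d-1)`-null sets) boundary. -/
def IsGGNormal {d : ℕ} (A : Set (EuclideanSpace ℝ (Fin d)))
    (ν : EuclideanSpace ℝ (Fin d) → EuclideanSpace ℝ (Fin d)) : Prop :=
  (∀ x ∈ essBoundary A, ‖ν x‖ = 1) ∧
  ∀ T : EuclideanSpace ℝ (Fin d) → EuclideanSpace ℝ (Fin d),
    ContDiff ℝ 1 T → HasCompactSupport T →
      ∫ x in A, divg T x = ∫ x in essBoundary A, ⟪T x, ν x⟫ ∂(μH[(d : ℝ) - 1])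

/-- `g ∈ W^{1,1}(Ω)`: `g` is integrable on `Ω` with integrable distributional derivative. -/
def MemW11 (g : ℝ → ℝ) (Ω : Set ℝ) : Prop :=
  IntegrableOn g Ω ∧ ∃ g' : ℝ → ℝ, IntegrableOn g' Ω ∧
    ∀ φ : ℝ → ℝ, ContDiff ℝ 1 φ → HasCompactSupport φ → tsupport φ ⊆ Ω →
      ∫ z in Ω, g z * deriv φ z = - ∫ z in Ω, g' z * φ z

/-- Rigidity for the perimeter inequality under Schwarz symmetrisation: every equality
case is a horizontal translate of `F_ℓ`. -/
def Rigidity (m : ℕ) (ℓ : ℝ → ℝ) : Prop :=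
  ∀ A : Set (EuclideanSpace ℝ (Fin (m + 1))), MeasurableSet A → IsDistributed m ℓ A →
    perim A univ = perim (F m ℓ) univ →
    ∃ τ : EuclideanSpace ℝ (Fin m), volume (A ∆ vtrans τ (F m ℓ)) = 0

/-- A decomposition `Dℓ = g dx + ε dσ` of the distributional derivative of `ℓ`:
`g = ∇ℓ` is the absolutely continuous density, `σ = |D^s ℓ|` and `ε` the sign of the
singular part. -/
def IsDerivDecomp (ℓ g ε : ℝ → ℝ) (σ : Measure ℝ) : Prop :=
  Integrable g ∧ σ ⟂ₘ (volume : Measure ℝ) ∧ IsFiniteMeasure σ ∧ (∀ᵐ x ∂σ, |ε x| = 1) ∧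
    ∀ φ : ℝ → ℝ, ContDiff ℝ 1 φ → HasCompactSupport φ →
      ∫ x, ℓ x * deriv φ x = -(∫ x, φ x * g x) - ∫ x, φ x * ε x ∂σ

/-- Bounded variation on `ℝ` via the variational definition. -/
def HasBddVariation (g : ℝ → ℝ) : Prop :=
  ∃ C : ℝ, ∀ T : ℝ → ℝ, ContDiff ℝ 1 T → HasCompactSupport T → (∀ x, |T x| ≤ 1) →
    ∫ x, g x * deriv T x ≤ C

/-!
If `‖w‖ < s` and the heights `{r < s}` have one-dimensional density `0` at `z`, then inside
`B_ρ((z, w))` with `ρ ≤ s - ‖w‖` the complement of `{x | ‖tailv x‖ < r (x 0)}` lies in the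
cylinder `({r < s} ∩ (z - ρ, z + ρ)) × B_ρ(w)`, of volume `o(ρ) · ω_m ρ^m = o(ρ^(m+1))`.
The hypothesis `‖w‖ < r^∧(z)` provides such an `s`.
-/

section Splitting

variable {m : ℕ}

def splitEquiv (m : ℕ) : EuclideanSpace ℝ (Fin (m + 1)) ≃ᵐ ℝ × EuclideanSpace ℝ (Fin m) :=
  ((MeasurableEquiv.toLp 2 _).symm.trans (MeasurableEquiv.piFinSuccAbove (fun _ => ℝ) 0)).trans
    (MeasurableEquiv.prodCongr (MeasurableEquiv.refl ℝ) (MeasurableEquiv.toLp 2 _))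

lemma splitEquiv_apply (x : EuclideanSpace ℝ (Fin (m + 1))) :
    splitEquiv m x = (x 0, tailv x) :=
  rfl

lemma measurePreserving_splitEquiv : MeasurePreserving (splitEquiv m) :=
  ((EuclideanSpace.volume_preserving_symm_measurableEquiv_toLp _).trans
    (volume_preserving_piFinSuccAbove (fun _ => ℝ) 0)).trans
    ((MeasurePreserving.id volume).prod (PiLp.volume_preserving_toLp _))

lemma volume_preimage_splitEquiv_prod (S : Set ℝ) (T : Set (EuclideanSpace ℝ (Fin m))) :
    volume (splitEquiv m ⁻¹' S ×ˢ T) = volume S * volume T := by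
  rw [measurePreserving_splitEquiv.measure_preimage_equiv, Measure.volume_eq_prod,
    Measure.prod_prod]

lemma norm_sq_eq_sq_add_norm_tailv_sq (x : EuclideanSpace ℝ (Fin (m + 1))) :
    ‖x‖ ^ 2 = x 0 ^ 2 + ‖tailv x‖ ^ 2 := by
  simp [EuclideanSpace.norm_sq_eq, Fin.sum_univ_succ, tailv]

lemma abs_apply_zero_le_norm (x : EuclideanSpace ℝ (Fin (m + 1))) : |x 0| ≤ ‖x‖ :=
  abs_le_of_sq_le_sq (by nlinarith [norm_sq_eq_sq_add_norm_tailv_sq x]) (norm_nonneg x)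

lemma norm_tailv_le_norm (x : EuclideanSpace ℝ (Fin (m + 1))) : ‖tailv x‖ ≤ ‖x‖ :=
  le_of_sq_le_sq (by nlinarith [norm_sq_eq_sq_add_norm_tailv_sq x]) (norm_nonneg x)

lemma sub_mk'_apply_zero (x : EuclideanSpace ℝ (Fin (m + 1))) (z : ℝ)
    (w : EuclideanSpace ℝ (Fin m)) : (x - mk' z w) 0 = x 0 - z :=
  rfl

lemma tailv_sub_mk' (x : EuclideanSpace ℝ (Fin (m + 1))) (z : ℝ)
    (w : EuclideanSpace ℝ (Fin m)) : tailv (x - mk' z w) = tailv x - w := by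
  ext i
  simp [tailv, mk']

lemma ball_mk'_subset_preimage_splitEquiv (z : ℝ) (w : EuclideanSpace ℝ (Fin m)) (ρ : ℝ) :
    ball (mk' z w) ρ ⊆ splitEquiv m ⁻¹' ball z ρ ×ˢ ball w ρ := by
  intro x hx
  rw [mem_ball, dist_eq_norm] at hx
  rw [mem_preimage, splitEquiv_apply, mem_prod]
  refine ⟨?_, ?_⟩
  · rw [mem_ball, Real.dist_eq, ← sub_mk'_apply_zero x z w]
    exact (abs_apply_zero_le_norm _).trans_lt hx
  · rw [mem_ball, dist_eq_norm, ← tailv_sub_mk']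
    exact (norm_tailv_le_norm _).trans_lt hx

lemma ball_diff_subset_preimage_splitEquiv (r : ℝ → ℝ) {s ρ : ℝ} (z : ℝ)
    (w : EuclideanSpace ℝ (Fin m)) (hρ : ‖w‖ + ρ ≤ s) :
    ball (mk' z w) ρ \ {x | ‖tailv x‖ < r (x 0)} ⊆
      splitEquiv m ⁻¹' ({y | r y < s} ∩ ball z ρ) ×ˢ ball w ρ := by
  rintro x ⟨hx, hxr⟩
  obtain ⟨hz, hw⟩ := ball_mk'_subset_preimage_splitEquiv z w ρ hx
  refine ⟨⟨?_, hz⟩, hw⟩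
  rw [splitEquiv_apply, mem_ball, dist_eq_norm] at hw
  have hrx : r (x 0) ≤ ‖tailv x‖ := not_lt.1 hxr
  show r (x 0) < s
  linarith [norm_le_insert' (tailv x) w]

end Splitting

lemma ballVol_ne_zero (d : ℕ) : ballVol d ≠ 0 :=
  (measure_ball_pos _ _ one_pos).ne'

lemma ballVol_ne_top (d : ℕ) : ballVol d ≠ ⊤ :=
  measure_ball_lt_top.ne

lemma volume_ball_eq_ballVol_mul {d : ℕ} (x : EuclideanSpace ℝ (Fin d)) {ρ : ℝ} (hρ : 0 < ρ) :
    volume (ball x ρ) = ballVol d * ENNReal.ofReal (ρ ^ d) := by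
  rw [Measure.addHaar_ball_of_pos _ _ hρ, finrank_euclideanSpace_fin, mul_comm]
  rfl

lemma densAt_one_of_tendsto_diff {d : ℕ} {A : Set (EuclideanSpace ℝ (Fin d))}
    {x : EuclideanSpace ℝ (Fin d)}
    (h : Tendsto (fun ρ : ℝ => volume (ball x ρ \ A) / (ballVol d * ENNReal.ofReal (ρ ^ d)))
      (𝓝[>] 0) (𝓝 0)) :
    DensAt A x 1 := by
  have hlower := ENNReal.Tendsto.sub tendsto_const_nhds h (.inl ENNReal.one_ne_top)
  rw [tsub_zero] at hlower
  refine tendsto_of_tendsto_of_tendsto_of_le_of_le' hlower tendsto_const_nhds ?_ ?_ <;>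
    filter_upwards [self_mem_nhdsWithin] with ρ (hρ : 0 < ρ) <;>
    rw [← volume_ball_eq_ballVol_mul x hρ,
      ← ENNReal.div_self (measure_ball_pos volume x hρ).ne' measure_ball_lt_top.ne]
  · rw [← ENNReal.sub_div fun _ _ => (measure_ball_pos volume x hρ).ne']
    refine ENNReal.div_le_div_right ?_ _
    simpa [sdiff_sdiff_right_self, inter_comm] using
      le_measure_sdiff (μ := volume) (s₁ := ball x ρ) (s₂ := ball x ρ \ A)
  · exact ENNReal.div_le_div_right (measure_mono inter_subset_right) _

lemma mul_ofReal_pow_div_ofReal_pow_succ (a b c : ℝ≥0∞) (m : ℕ) {ρ : ℝ} (hρ : 0 < ρ)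
    (hc₀ : c ≠ 0) (hc : c ≠ ⊤) :
    a * (b * ENNReal.ofReal (ρ ^ m)) / (c * ENNReal.ofReal (ρ ^ (m + 1))) =
      a / ENNReal.ofReal (2 * ρ) * (2 * b / c) := by
  set t := ENNReal.ofReal (ρ ^ m)
  set u := ENNReal.ofReal ρ
  have ht₀ : t ≠ 0 := by simpa [t] using pow_pos hρ m
  rw [pow_succ, ENNReal.ofReal_mul (by positivity), ENNReal.ofReal_mul zero_le_two,
    ENNReal.ofReal_ofNat]
  simp only [div_eq_mul_inv]
  rw [ENNReal.mul_inv (.inl hc₀) (.inl hc),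
    ENNReal.mul_inv (.inl ht₀) (.inl ENNReal.ofReal_ne_top),
    ENNReal.mul_inv (.inl two_ne_zero) (.inl ENNReal.ofNat_ne_top)]
  calc _ = a * b * c⁻¹ * u⁻¹ * (t * t⁻¹) := by ring
    _ = a * b * c⁻¹ * u⁻¹ * (2 * 2⁻¹) := by
      rw [ENNReal.mul_inv_cancel ht₀ ENNReal.ofReal_ne_top,
        ENNReal.mul_inv_cancel two_ne_zero ENNReal.ofNat_ne_top]
    _ = _ := by ring

lemma densAt_one_of_densAtR_sublevel {m : ℕ} (r : ℝ → ℝ) {s z : ℝ}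
    {w : EuclideanSpace ℝ (Fin m)} (hws : ‖w‖ < s) (hs : DensAtR {y | r y < s} z 0) :
    DensAt {x | ‖tailv x‖ < r (x 0)} (mk' z w) 1 := by
  apply densAt_one_of_tendsto_diff
  have hC : 2 * ballVol m / ballVol (m + 1) ≠ ⊤ :=
    ENNReal.div_ne_top (ENNReal.mul_ne_top ENNReal.ofNat_ne_top (ballVol_ne_top m))
      (ballVol_ne_zero (m + 1))
  have hbound := ENNReal.Tendsto.mul_const hs (.inr hC)
  rw [zero_mul] at hbound
  refine tendsto_of_tendsto_of_tendsto_of_le_of_le' tendsto_const_nhds hbound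
    (.of_forall fun _ => zero_le) ?_
  filter_upwards [Ioo_mem_nhdsGT (sub_pos.2 hws)] with ρ ⟨hρ, hρs⟩
  rw [← mul_ofReal_pow_div_ofReal_pow_succ _ _ _ m hρ (ballVol_ne_zero _) (ballVol_ne_top _)]
  refine ENNReal.div_le_div_right ?_ _
  calc _ ≤ volume (splitEquiv m ⁻¹' ({y | r y < s} ∩ ball z ρ) ×ˢ ball w ρ) :=
        measure_mono (ball_diff_subset_preimage_splitEquiv r z w (by linarith))
    _ = _ := by rw [volume_preimage_splitEquiv_prod, volume_ball_eq_ballVol_mul w hρ]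

lemma exists_lt_densAtR_of_lt_approxLower {g : ℝ → ℝ} {x a : ℝ}
    (h : (a : EReal) < approxLower g x) : ∃ s, a < s ∧ DensAtR {y | g y < s} x 0 := by
  obtain ⟨_, ⟨s, hs, rfl⟩, has⟩ := lt_sSup_iff.1 h
  exact ⟨s, EReal.coe_lt_coe_iff.1 has, hs⟩

theorem densAt_one_general (m : ℕ) (ℓ : ℝ → ℝ) (zb : ℝ) (w : EuclideanSpace ℝ (Fin m))
    (hw : ((‖w‖ : ℝ) : EReal) < approxLower (rad m ℓ) zb) :
    DensAt (F m ℓ) (mk' zb w) 1 := by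
  obtain ⟨s, hws, hs⟩ := exists_lt_densAtR_of_lt_approxLower hw
  exact densAt_one_of_densAtR_sublevel (rad m ℓ) hws hs

/-- points with `|w| < r_ℓ^∧(zb)` have density 1 for `F_ℓ`. -/
theorem densAt_one (m : ℕ) (hm : 1 ≤ m)
    (ℓ : ℝ → ℝ) (hmeas : Measurable ℓ) (hpos : ∀ z, 0 ≤ ℓ z)
    (hper : HasFinPerim (F m ℓ)) (hvol : volume (F m ℓ) < ⊤)
    (zb : ℝ) (w : EuclideanSpace ℝ (Fin m))
    (hw : ((‖w‖ : ℝ) : EReal) < approxLower (rad m ℓ) zb) :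
    DensAt (F m ℓ) (mk' zb w) 1 :=
  densAt_one_general m ℓ zb w hw

end Schwarz
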